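/- In the braid group of type A₂, i.e. the group with presentation ⟨σ₁, σ₂ ∣ σ₁σ₂σ₁ = σ₂σ₁σ₂⟩ (the braid group on 3 strands), the center equals the cyclic subgroup generated by the element Δ_A = (σ₁σ₂)³. -/

import Mathlib

/-!
The full twist `Δ = (σ₁σ₂)³ = (σ₁σ₂σ₁)²` is central because conjugation by the half twist
`σ₁σ₂σ₁` swaps `σ₁` and `σ₂`. Conversely, `σ₁ ↦ y⁻¹x, σ₂ ↦ x⁻¹y²` defines a map `π` from `B₃`
to the free product `ℤ/2 ∗ ℤ/3 = ⟨x⟩ ∗ ⟨y⟩` sending `σ₁σ₂σ₁ ↦ x` and `σ₁σ₂ ↦ y`. Since these two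
elements have order `2` and `3` modulo `Δ`, there is a map `ψ` back to `B₃ ⧸ ⟨Δ⟩` with `ψ ∘ π` the
quotient map. A central `z` is sent by `π` to an element commuting with `x` and `y`, which is
trivial by a reduced-word argument in the free product; hence `z ∈ ⟨Δ⟩`.
-/

/-- Relator of the braid group of type `A₂` (braid group on 3 strands):
`σ₁σ₂σ₁σ₂⁻¹σ₁⁻¹σ₂⁻¹`. -/
def A2BraidRels : Set (FreeGroup (Fin 2)) :=
  { FreeGroup.of 0 * FreeGroup.of 1 * FreeGroup.of 0 *
      (FreeGroup.of 1)⁻¹ * (FreeGroup.of 0)⁻¹ * (FreeGroup.of 1)⁻¹ }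

namespace Monoid.CoprodI

variable {ι : Type*} {M : ι → Type*} [∀ i, Monoid (M i)]

theorem Word.prod_injective : Function.Injective (Word.prod : Word M → CoprodI M) := by
  classical exact Word.equiv.symm.injective

namespace NeWord

variable {i j k l : ι}

theorem toList_eq_of_prod_eq {v : NeWord M i j} {w : NeWord M k l} (h : v.prod = w.prod) :
    v.toList = w.toList :=
  congrArg Word.toList (Word.prod_injective h)

theorem head_idx_eq_of_prod_eq {v : NeWord M i j} {w : NeWord M k l} (h : v.prod = w.prod) :
    i = k := by
  simpa using congrArg (·.head?.map Sigma.fst) (toList_eq_of_prod_eq h)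

theorem last_idx_eq_of_prod_eq {v : NeWord M i j} {w : NeWord M k l} (h : v.prod = w.prod) :
    j = l := by
  simpa using congrArg (·.getLast?.map Sigma.fst) (toList_eq_of_prod_eq h)

theorem one_lt_length_of_ne (w : NeWord M i l) (h : i ≠ l) : 1 < w.toList.length := by
  by_contra! hw
  obtain ⟨a, ha⟩ :=
    List.length_eq_one_iff.mp (le_antisymm hw (List.length_pos_iff.mpr w.toList_ne_nil))
  have h₁ := w.toList_head?
  have h₂ := w.toList_getLast?
  rw [ha] at h₁ h₂
  simp only [List.head?_cons, List.getLast?_singleton, Option.some.injEq] at h₁ h₂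
  exact h (congrArg Sigma.fst (h₁.symm.trans h₂))

theorem exists_prod_eq_of_head_mul (w : NeWord M i l) (hw : 1 < w.toList.length) :
    ∃ (k : ι) (_ : i ≠ k) (w' : NeWord M k l), w.prod = of w.head * w'.prod := by
  induction w with
  | singleton _ _ => simp at hw
  | append w₁ hne w₂ ih₁ _ =>
    by_cases h₁ : 1 < w₁.toList.length
    · obtain ⟨k', hk', w', hw'⟩ := ih₁ h₁
      exact ⟨k', hk', w'.append hne w₂, by simp [hw', mul_assoc]⟩
    · cases w₁ with
      | singleton _ _ => exact ⟨_, hne, w₂, by simp⟩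
      | append u _ v =>
        have := List.length_pos_iff.mpr u.toList_ne_nil
        have := List.length_pos_iff.mpr v.toList_ne_nil
        simp only [toList, List.length_append, not_lt] at h₁
        omega

variable {e : M k}

theorem not_commute_of_ne_head_of_ne_last (he : e ≠ 1) (w : NeWord M i l) (hi : k ≠ i)
    (hl : l ≠ k) : ¬Commute (of e) w.prod := fun hc =>
  hi <| head_idx_eq_of_prod_eq (v := (singleton e he).append hi w)
    (w := w.append hl (singleton e he)) (by simp [hc.eq])

theorem not_commute_of_ne_last (he : e ≠ 1) (w : NeWord M i l) (hl : l ≠ k) :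
    ¬Commute (of e) w.prod := by
  rcases eq_or_ne k i with rfl | hi
  · intro hc
    obtain ⟨k', hk', w', hw⟩ := exists_prod_eq_of_head_mul w (one_lt_length_of_ne w hl.symm)
    by_cases hcancel : e * w.head = 1
    -- `e` cancels the first letter of `w`, and what remains still commutes with `of e`.
    · have ht : of e * w.prod = w'.prod := by
        rw [hw, ← mul_assoc, ← map_mul, hcancel, map_one, one_mul]
      exact not_commute_of_ne_head_of_ne_last he w' hk' hl (ht ▸ (Commute.refl _).mul_right hc)
    · exact hl <| last_idx_eq_of_prod_eq (v := w.mulHead e hcancel)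
        (w := w.append hl (singleton e he)) (by simp [hc.eq])
  · exact not_commute_of_ne_head_of_ne_last he w hi hl

end NeWord

theorem eq_one_of_commute_of_ne {i j : ι} (hij : i ≠ j) {x : M i} {y : M j} (hx : x ≠ 1)
    (hy : y ≠ 1) {g : CoprodI M} (hgx : Commute (of x) g) (hgy : Commute (of y) g) : g = 1 := by
  classical
  by_contra hg
  obtain ⟨f, l, w, hw⟩ := NeWord.of_word (Word.equiv g) fun h => hg <| by
    rw [← Word.equiv.symm_apply_apply g, h]; rfl
  have hgw : g = w.prod := by
    rw [NeWord.prod, hw]; exact (Word.equiv.symm_apply_apply g).symm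
  subst hgw
  rcases eq_or_ne l i with rfl | hl
  · exact NeWord.not_commute_of_ne_last hy w hij hgy
  · exact NeWord.not_commute_of_ne_last hx w hl hgx

end Monoid.CoprodI

theorem Subgroup.normal_of_le_center {G : Type*} [Group G] {N : Subgroup G}
    (h : N ≤ Subgroup.center G) : N.Normal :=
  ⟨fun n hn g => by rwa [Subgroup.mem_center_iff.mp (h hn) g, mul_inv_cancel_right]⟩

theorem PresentedGroup.mem_center_of_forall_commute {α : Type*} {rels : Set (FreeGroup α)}
    {z : PresentedGroup rels} (h : ∀ a, Commute (of a) z) : z ∈ Subgroup.center _ :=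
  Subgroup.mem_center_iff.mpr fun g =>
    Subgroup.mem_centralizer_singleton_iff.mp <| PresentedGroup.generated_by _ _
      (fun a => Subgroup.mem_centralizer_singleton_iff.mpr (h a).eq) g

def zmodPowersHom {G : Type*} [Group G] (n : ℕ) (g : G) (hg : g ^ n = 1) :
    Multiplicative (ZMod n) →* G :=
  AddMonoidHom.toMultiplicativeLeft <| ZMod.lift n
    ⟨zmultiplesHom (Additive G) (Additive.ofMul g), by simpa using congrArg Additive.ofMul hg⟩

theorem zmodPowersHom_ofAdd_one {G : Type*} [Group G] (n : ℕ) (g : G) (hg : g ^ n = 1) :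
    zmodPowersHom n g hg (Multiplicative.ofAdd 1) = g := by
  rw [zmodPowersHom, AddMonoidHom.coe_toMultiplicativeLeft, Function.comp_apply,
    Function.comp_apply, toAdd_ofAdd, ← Int.cast_one, ZMod.lift_coe]
  simp

namespace BraidA2

noncomputable abbrev σ₁ : PresentedGroup A2BraidRels := .of 0
noncomputable abbrev σ₂ : PresentedGroup A2BraidRels := .of 1

theorem braid : σ₁ * σ₂ * σ₁ = σ₂ * σ₁ * σ₂ := by
  have h : σ₁ * σ₂ * σ₁ * σ₂⁻¹ * σ₁⁻¹ * σ₂⁻¹ = 1 :=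
    PresentedGroup.one_of_mem (Set.mem_singleton _)
  rwa [mul_inv_eq_one, mul_inv_eq_iff_eq_mul, mul_inv_eq_iff_eq_mul, mul_assoc σ₂] at h

noncomputable def halfTwist : PresentedGroup A2BraidRels := σ₁ * σ₂ * σ₁

noncomputable def fullTwist : PresentedGroup A2BraidRels := (σ₁ * σ₂) ^ 3

theorem halfTwist_mul_σ₁ : halfTwist * σ₁ = σ₂ * halfTwist := by
  unfold halfTwist
  nth_rw 1 [braid]
  group

theorem halfTwist_mul_σ₂ : halfTwist * σ₂ = σ₁ * halfTwist := by
  unfold halfTwist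
  nth_rw 2 [braid]
  group

theorem halfTwist_sq : halfTwist ^ 2 = fullTwist := by
  rw [halfTwist, fullTwist, sq]
  nth_rw 2 [braid]
  rw [pow_succ, pow_succ, pow_one]
  group

theorem commute_generator_fullTwist (a : Fin 2) : Commute (PresentedGroup.of a) fullTwist := by
  rw [← halfTwist_sq, sq]
  fin_cases a
  · show σ₁ * (halfTwist * halfTwist) = halfTwist * halfTwist * σ₁
    rw [mul_assoc halfTwist, halfTwist_mul_σ₁, ← mul_assoc halfTwist σ₂, halfTwist_mul_σ₂,
      mul_assoc]
  · show σ₂ * (halfTwist * halfTwist) = halfTwist * halfTwist * σ₂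
    rw [mul_assoc halfTwist, halfTwist_mul_σ₂, ← mul_assoc halfTwist σ₁, halfTwist_mul_σ₁,
      mul_assoc]

theorem fullTwist_mem_center : fullTwist ∈ Subgroup.center (PresentedGroup A2BraidRels) :=
  PresentedGroup.mem_center_of_forall_commute commute_generator_fullTwist

instance : (Subgroup.zpowers fullTwist).Normal :=
  Subgroup.normal_of_le_center (Subgroup.zpowers_le.mpr fullTwist_mem_center)

abbrev H := Monoid.CoprodI fun i : Fin 2 => Multiplicative (ZMod (![2, 3] i))

noncomputable abbrev x : H := Monoid.CoprodI.of (i := 0) (Multiplicative.ofAdd 1)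

noncomputable abbrev y : H := Monoid.CoprodI.of (i := 1) (Multiplicative.ofAdd 1)

theorem x_sq : x ^ 2 = 1 := by
  rw [← map_pow]
  exact (map_eq_one_iff _ (Monoid.CoprodI.of_injective _)).mpr (by decide)

theorem y_pow_three : y ^ 3 = 1 := by
  rw [← map_pow]
  exact (map_eq_one_iff _ (Monoid.CoprodI.of_injective _)).mpr (by decide)

noncomputable def π : PresentedGroup A2BraidRels →* H :=
  PresentedGroup.toGroup (f := ![y⁻¹ * x, x⁻¹ * y ^ 2]) <| by
    rintro _ rfl
    calc _ = x * (y ^ 3)⁻¹ * x := by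
          simp only [map_mul, map_inv, FreeGroup.lift_apply_of, Matrix.cons_val_zero,
            Matrix.cons_val_one, Matrix.cons_val_fin_one]
          group
      _ = 1 := by rw [y_pow_three, inv_one, mul_one, ← sq, x_sq]

theorem π_σ₁ : π σ₁ = y⁻¹ * x := PresentedGroup.toGroup.of _

theorem π_σ₂ : π σ₂ = x⁻¹ * y ^ 2 := PresentedGroup.toGroup.of _

theorem π_halfTwist : π halfTwist = x := by
  rw [halfTwist, map_mul, map_mul, π_σ₁, π_σ₂]
  group

theorem π_σ₁_mul_σ₂ : π (σ₁ * σ₂) = y := by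
  rw [map_mul, π_σ₁, π_σ₂]
  group

abbrev Q := PresentedGroup A2BraidRels ⧸ Subgroup.zpowers fullTwist

theorem mk_halfTwist_sq : (halfTwist : Q) ^ 2 = 1 := by
  rw [← QuotientGroup.mk_pow, QuotientGroup.eq_one_iff, halfTwist_sq]
  exact Subgroup.mem_zpowers _

theorem mk_σ₁_mul_σ₂_pow_three : ((σ₁ * σ₂ : PresentedGroup A2BraidRels) : Q) ^ 3 = 1 := by
  rw [← QuotientGroup.mk_pow, QuotientGroup.eq_one_iff]
  exact Subgroup.mem_zpowers _

noncomputable def ψ : H →* Q :=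
  Monoid.CoprodI.lift fun i => match i with
    | 0 => zmodPowersHom 2 _ mk_halfTwist_sq
    | 1 => zmodPowersHom 3 _ mk_σ₁_mul_σ₂_pow_three

theorem ψ_x : ψ x = halfTwist :=
  (Monoid.CoprodI.lift_of _ _).trans (zmodPowersHom_ofAdd_one ..)

theorem ψ_y : ψ y = (σ₁ * σ₂ : PresentedGroup A2BraidRels) :=
  (Monoid.CoprodI.lift_of _ _).trans (zmodPowersHom_ofAdd_one ..)

theorem ψ_comp_π : ψ.comp π = QuotientGroup.mk' (Subgroup.zpowers fullTwist) := by
  refine PresentedGroup.ext fun a => ?_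
  fin_cases a
  · show ψ (π σ₁) = σ₁
    rw [π_σ₁, map_mul, map_inv, ψ_x, ψ_y, ← QuotientGroup.mk_inv, ← QuotientGroup.mk_mul,
      halfTwist]
    congr 1
    group
  · show ψ (π σ₂) = σ₂
    rw [π_σ₂, map_mul, map_inv, map_pow, ψ_x, ψ_y, ← QuotientGroup.mk_inv,
      ← QuotientGroup.mk_pow, ← QuotientGroup.mk_mul, halfTwist]
    congr 1
    rw [sq]
    group

theorem π_eq_one_of_mem_center {z : PresentedGroup A2BraidRels}
    (hz : z ∈ Subgroup.center (PresentedGroup A2BraidRels)) : π z = 1 := by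
  have hx : Commute x (π z) :=
    π_halfTwist ▸ Commute.map (Subgroup.mem_center_iff.mp hz halfTwist) π
  have hy : Commute y (π z) :=
    π_σ₁_mul_σ₂ ▸ Commute.map (Subgroup.mem_center_iff.mp hz (σ₁ * σ₂)) π
  exact Monoid.CoprodI.eq_one_of_commute_of_ne (by decide) (by decide) (by decide) hx hy

end BraidA2

open BraidA2 in
theorem stmt_14 :
    Subgroup.center (PresentedGroup A2BraidRels) =
      Subgroup.zpowers
        (((PresentedGroup.of 0 : PresentedGroup A2BraidRels) * PresentedGroup.of 1) ^ 3) := by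
  change _ = Subgroup.zpowers fullTwist
  refine le_antisymm (fun z hz => ?_) (Subgroup.zpowers_le.mpr fullTwist_mem_center)
  rw [← QuotientGroup.eq_one_iff, ← QuotientGroup.mk'_apply, ← ψ_comp_π, MonoidHom.comp_apply,
    π_eq_one_of_mem_center hz, map_one]
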